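/- arXiv:1501.00837 — 2 statements merged into one kernel-verified Lean document; each statement's English description precedes it below -/
import Mathlib

section
/- The function x̂ = Σ_{m=0}^{∞} Σ_{k=0}^{2^m−1} e_{m,k} on [0,1] attains its global maximum (2 + √2)/3 at t = 1/3 and t = 2/3. -/
noncomputable def e00 (t : ℝ) : ℝ := max (min t (1 - t)) 0

noncomputable def e (m : ℕ) (k : ℤ) (t : ℝ) : ℝ :=
  (2 : ℝ) ^ (-(m : ℝ) / 2) * e00 ((2 : ℝ) ^ m * t - k)

noncomputable def xhat (t : ℝ) : ℝ :=
  ∑' m : ℕ, ∑ k ∈ Finset.range (2 ^ m), e m k t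

/-!
On `[0, 1]` the hat functions of level `m` add up to `2^{-m/2} ‖2^m t‖`, where `‖x‖ = distToInt x`
is the distance to the nearest integer, so `x̂ t = ∑ cᵐ uₘ` with `c = 1/√2` and `uₘ = ‖2^m t‖`.
Since `u_{m+1} = ‖2 uₘ‖ ≤ 1 - 2 uₘ`, the sequence obeys `2 uₘ + u_{m+1} ≤ 1`, and a linear
programming duality argument shows that for `1/2 ≤ c < 1` such nonnegative sequences satisfy
`∑ cᵐ uₘ ≤ ∑ cᵐ / 3`. The constant sequence `uₘ = 1/3`, realised by `t = 1/3` and `t = 2/3`,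
attains the bound `1 / (3 (1 - 1/√2)) = (2 + √2) / 3`.
-/

open Finset

noncomputable def distToInt (x : ℝ) : ℝ := |x - round x|

lemma distToInt_nonneg (x : ℝ) : 0 ≤ distToInt x := abs_nonneg _

lemma distToInt_le_half (x : ℝ) : distToInt x ≤ 1 / 2 := abs_sub_round x

lemma distToInt_le_abs_sub (x : ℝ) (z : ℤ) : distToInt x ≤ |x - z| := round_le x z

lemma distToInt_add_intCast (x : ℝ) (n : ℤ) : distToInt (x + n) = distToInt x := by
  rw [distToInt, round_add_intCast, Int.cast_add, add_sub_add_right_eq_sub, distToInt]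

lemma distToInt_sub_natCast (x : ℝ) (n : ℕ) : distToInt (x - n) = distToInt x := by
  simpa [← sub_eq_add_neg] using distToInt_add_intCast x (-n)

lemma distToInt_neg_le (x : ℝ) : distToInt (-x) ≤ distToInt x := by
  calc distToInt (-x) ≤ |-x - ((-round x : ℤ) : ℝ)| := distToInt_le_abs_sub _ _
    _ = distToInt x := by rw [distToInt, Int.cast_neg, ← abs_neg]; ring_nf

lemma distToInt_neg (x : ℝ) : distToInt (-x) = distToInt x :=
  le_antisymm (distToInt_neg_le x) (by simpa using distToInt_neg_le (-x))

lemma distToInt_two_mul_distToInt (x : ℝ) :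
    distToInt (2 * distToInt x) = distToInt (2 * x) := by
  have h : distToInt (2 * (x - round x)) = distToInt (2 * x) := by
    simpa [mul_sub, ← sub_eq_add_neg] using distToInt_add_intCast (2 * x) (-(2 * round x))
  show distToInt (2 * |x - round x|) = _
  rcases abs_choice (x - round x) with hr | hr
  · rw [hr, h]
  · rw [hr, mul_neg, distToInt_neg, h]

lemma distToInt_eq_min {y : ℝ} (hy : y ∈ Set.Icc 0 1) : distToInt y = min y (1 - y) := by
  apply le_antisymm
  · refine le_min ?_ ?_
    · simpa [abs_of_nonneg hy.1] using distToInt_le_abs_sub y 0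
    · simpa [abs_sub_comm y, abs_of_nonneg (sub_nonneg.2 hy.2)] using distToInt_le_abs_sub y 1
  · rcases le_or_gt (round y) 0 with h | h
    · have : (round y : ℝ) ≤ 0 := by exact_mod_cast h
      exact (min_le_left _ _).trans (by rw [distToInt]; linarith [le_abs_self (y - round y)])
    · have : (1 : ℝ) ≤ round y := by exact_mod_cast h
      exact (min_le_right _ _).trans (by rw [distToInt]; linarith [neg_abs_le (y - round y)])

lemma two_mul_distToInt_add_distToInt_two_mul_le (x : ℝ) :
    2 * distToInt x + distToInt (2 * x) ≤ 1 := by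
  have h := distToInt_le_abs_sub (2 * distToInt x) 1
  rw [Int.cast_one, abs_of_nonpos (by linarith [distToInt_le_half x]),
    distToInt_two_mul_distToInt] at h
  linarith

lemma distToInt_two_mul_of_eq_third {x : ℝ} (hx : distToInt x = 1 / 3) :
    distToInt (2 * x) = 1 / 3 := by
  rw [← distToInt_two_mul_distToInt, hx, distToInt_eq_min ⟨by norm_num, by norm_num⟩]
  norm_num

lemma distToInt_two_pow_mul_of_eq_third {x : ℝ} (hx : distToInt x = 1 / 3) (m : ℕ) :
    distToInt (2 ^ m * x) = 1 / 3 := by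
  induction m with
  | zero => simpa using hx
  | succ m ih => rw [pow_succ', mul_assoc, distToInt_two_mul_of_eq_third ih]

lemma e00_of_nonpos {y : ℝ} (hy : y ≤ 0) : e00 y = 0 :=
  max_eq_right (min_le_of_left_le hy)

lemma e00_of_one_le {y : ℝ} (hy : 1 ≤ y) : e00 y = 0 :=
  max_eq_right (min_le_of_right_le (by linarith))

lemma e00_eq_distToInt {y : ℝ} (hy : y ∈ Set.Icc 0 1) : e00 y = distToInt y := by
  rw [e00, distToInt_eq_min hy, max_eq_left (le_min hy.1 (by linarith [hy.2]))]

lemma sum_range_e00_sub (N : ℕ) {x : ℝ} (hx : x ∈ Set.Icc 0 (N : ℝ)) :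
    ∑ k ∈ range N, e00 (x - k) = distToInt x := by
  induction N generalizing x with
  | zero =>
    obtain rfl : x = 0 := le_antisymm (by simpa using hx.2) hx.1
    simp [distToInt]
  | succ N ih =>
    rw [sum_range_succ]
    rcases le_total x N with hxN | hNx
    · rw [ih ⟨hx.1, hxN⟩, e00_of_nonpos (by linarith), add_zero]
    · have hterm : ∀ k ∈ range N, e00 (x - k) = 0 := fun k hk => e00_of_one_le <| by
        have : (k : ℝ) + 1 ≤ N := by exact_mod_cast mem_range.1 hk
        linarith
      have hx' : x - N ∈ Set.Icc 0 1 := ⟨by linarith, by push_cast at hx; linarith [hx.2]⟩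
      rw [sum_eq_zero hterm, zero_add, e00_eq_distToInt hx', distToInt_sub_natCast]

lemma two_rpow_neg_div_two (m : ℕ) : (2 : ℝ) ^ (-(m : ℝ) / 2) = (√2)⁻¹ ^ m := by
  rw [neg_div, Real.rpow_neg zero_le_two, div_eq_mul_one_div, mul_comm, Real.rpow_mul zero_le_two,
    ← Real.sqrt_eq_rpow, Real.rpow_natCast, inv_pow]

lemma sum_range_e (m : ℕ) {t : ℝ} (ht : t ∈ Set.Icc 0 1) :
    ∑ k ∈ range (2 ^ m), e m k t = (√2)⁻¹ ^ m * distToInt (2 ^ m * t) := by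
  have hx : 2 ^ m * t ∈ Set.Icc 0 ((2 ^ m : ℕ) : ℝ) := by
    push_cast
    exact ⟨by positivity [ht.1], mul_le_of_le_one_right (by positivity) ht.2⟩
  simp only [e, two_rpow_neg_div_two, Int.cast_natCast, ← mul_sum, sum_range_e00_sub _ hx]

lemma xhat_eq_tsum {t : ℝ} (ht : t ∈ Set.Icc 0 1) :
    xhat t = ∑' m : ℕ, (√2)⁻¹ ^ m * distToInt (2 ^ m * t) :=
  tsum_congr fun m => sum_range_e m ht

section DualWeights

variable {c : ℝ}

/-- Weights with `cⁿ = 2 λₙ₊₁ + λₙ` and `λ₀ = 0`: they make `∑ cⁿ (uₙ - 1/3)` telescope against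
the constraints `2 uₙ + uₙ₊₁ ≤ 1`. -/
noncomputable def dualWeight (c : ℝ) : ℕ → ℝ
  | 0 => 0
  | n + 1 => (c ^ n - dualWeight c n) / 2

lemma dualWeight_nonneg_and_le_pow (hc : 1 / 2 ≤ c) (n : ℕ) :
    0 ≤ dualWeight c n ∧ dualWeight c n ≤ c ^ n := by
  induction n with
  | zero => simp [dualWeight]
  | succ n ih =>
    have hcn : 0 ≤ c ^ n := pow_nonneg (by linarith) n
    simp only [dualWeight, pow_succ]
    constructor <;> nlinarith [ih.1, ih.2]

lemma sum_range_pow_mul_sub_third_le (hc : 1 / 2 ≤ c) {u : ℕ → ℝ}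
    (hu : ∀ n, 2 * u n + u (n + 1) ≤ 1) (N : ℕ) :
    ∑ n ∈ range N, c ^ n * (u n - 1 / 3) + dualWeight c N * (u N - 1 / 3) ≤ 0 := by
  induction N with
  | zero => simp [dualWeight]
  | succ N ih =>
    have hweight : c ^ N = 2 * dualWeight c (N + 1) + dualWeight c N := by
      simp only [dualWeight]; ring
    have hstep : dualWeight c (N + 1) * (2 * (u N - 1 / 3) + (u (N + 1) - 1 / 3)) ≤ 0 :=
      mul_nonpos_of_nonneg_of_nonpos (dualWeight_nonneg_and_le_pow hc _).1 (by linarith [hu N])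
    rw [sum_range_succ, hweight]
    linarith

lemma sum_range_pow_mul_le (hc : 1 / 2 ≤ c) {u : ℕ → ℝ} (hu0 : ∀ n, 0 ≤ u n)
    (hu : ∀ n, 2 * u n + u (n + 1) ≤ 1) (N : ℕ) :
    ∑ n ∈ range N, c ^ n * u n ≤ (∑ n ∈ range (N + 1), c ^ n) / 3 := by
  have hsum := sum_range_pow_mul_sub_third_le hc hu N
  have hweight := dualWeight_nonneg_and_le_pow hc N
  have hsplit : ∑ n ∈ range N, c ^ n * u n
      = ∑ n ∈ range N, c ^ n * (u n - 1 / 3) + (∑ n ∈ range N, c ^ n) / 3 := by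
    rw [sum_div, ← sum_add_distrib]
    exact sum_congr rfl fun n _ => by ring
  rw [sum_range_succ, hsplit]
  nlinarith [mul_nonneg hweight.1 (hu0 N)]

lemma tsum_pow_mul_le (hc : 1 / 2 ≤ c) (hc1 : c < 1) {u : ℕ → ℝ} (hu0 : ∀ n, 0 ≤ u n)
    (hu : ∀ n, 2 * u n + u (n + 1) ≤ 1) :
    ∑' n, c ^ n * u n ≤ (1 - c)⁻¹ / 3 := by
  have hc0 : 0 ≤ c := by linarith
  refine Real.tsum_le_of_sum_range_le (fun n => mul_nonneg (pow_nonneg hc0 n) (hu0 n)) fun N => ?_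
  calc ∑ n ∈ range N, c ^ n * u n ≤ (∑ n ∈ range (N + 1), c ^ n) / 3 :=
        sum_range_pow_mul_le hc hu0 hu N
    _ ≤ (∑' n, c ^ n) / 3 := by
        gcongr
        exact (summable_geometric_of_lt_one hc0 hc1).sum_le_tsum _ fun n _ => pow_nonneg hc0 n
    _ = (1 - c)⁻¹ / 3 := by rw [tsum_geometric_of_lt_one hc0 hc1]

end DualWeights

lemma half_le_inv_sqrt_two : 1 / 2 ≤ (√2)⁻¹ := by
  rw [one_div]
  exact inv_anti₀ (by positivity) (by linarith [Real.sqrt_two_lt_three_halves])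

lemma inv_sqrt_two_lt_one : (√2)⁻¹ < 1 := inv_lt_one_of_one_lt₀ Real.one_lt_sqrt_two

lemma inv_one_sub_inv_sqrt_two : (1 - (√2)⁻¹)⁻¹ = 2 + √2 := by
  have h : (1 - (√2)⁻¹) = (√2 - 1) / √2 := by field_simp
  rw [h, inv_div, div_eq_mul_inv, Real.inv_sqrt_two_sub_one]
  nlinarith [Real.sq_sqrt (zero_le_two : (0 : ℝ) ≤ 2)]

lemma xhat_le {t : ℝ} (ht : t ∈ Set.Icc 0 1) : xhat t ≤ (2 + √2) / 3 := by
  rw [xhat_eq_tsum ht, ← inv_one_sub_inv_sqrt_two]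
  refine tsum_pow_mul_le half_le_inv_sqrt_two inv_sqrt_two_lt_one (fun n => distToInt_nonneg _)
    fun n => ?_
  rw [pow_succ', mul_assoc]
  exact two_mul_distToInt_add_distToInt_two_mul_le _

lemma xhat_of_distToInt_eq_third {t : ℝ} (ht : t ∈ Set.Icc 0 1) (h : distToInt t = 1 / 3) :
    xhat t = (2 + √2) / 3 := by
  have hc0 : 0 ≤ (√2)⁻¹ := by positivity
  simp only [xhat_eq_tsum ht, distToInt_two_pow_mul_of_eq_third h]
  rw [tsum_mul_right, tsum_geometric_of_lt_one hc0 inv_sqrt_two_lt_one, inv_one_sub_inv_sqrt_two]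
  ring

theorem stmt_6 :
    (∀ t ∈ Set.Icc (0 : ℝ) 1, xhat t ≤ (2 + Real.sqrt 2) / 3) ∧
    xhat (1 / 3) = (2 + Real.sqrt 2) / 3 ∧ xhat (2 / 3) = (2 + Real.sqrt 2) / 3 := by
  refine ⟨fun t ht => xhat_le ht, xhat_of_distToInt_eq_third ⟨by norm_num, by norm_num⟩ ?_,
    xhat_of_distToInt_eq_third ⟨by norm_num, by norm_num⟩ ?_⟩
  · rw [distToInt_eq_min ⟨by norm_num, by norm_num⟩]
    norm_num
  · rw [distToInt_eq_min ⟨by norm_num, by norm_num⟩]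
    norm_num
end

section
/- The maximal uniform oscillation over the class 𝒳 equals (5 + 4√2)/6, i.e., max_{x∈𝒳} max_{s,t∈[0,1]} |x(t) − x(s)| = (5 + 4√2)/6, and this maximum is attained by the function x* = e_{0,0} + Σ_{m≥1}(Σ_{k=0}^{2^{m−1}−1} e_{m,k} − Σ_{ℓ=2^{m−1}}^{2^m−1} e_{m,ℓ}) at s = 1/3, t = 5/6. -/
def mathcalX : Set (ℝ → ℝ) :=
  {x | ∃ θ : ℕ → ℕ → ℝ, (∀ m k, θ m k = 1 ∨ θ m k = -1) ∧
    ∀ t, x t = ∑' m : ℕ, ∑ k ∈ Finset.range (2 ^ m), θ m k * e m k t}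

/-- Coefficients of the function `x*`. -/
noncomputable def θstar (m k : ℕ) : ℝ :=
  if m = 0 then 1 else if k < 2 ^ (m - 1) then 1 else -1

noncomputable def xstar (t : ℝ) : ℝ :=
  ∑' m : ℕ, ∑ k ∈ Finset.range (2 ^ m), θstar m k * e m k t

/-!
Put `r = 1/√2`. The level-`m` part of a Schauder series is `r^m ∑ₖ θₘₖ e00 (2^m t - k)`, so
`|x t - x s|` is at most `D(s, t) = ∑ₘ rᵐ ∑ₖ |e00 (2^m t - k) - e00 (2^m s - k)|`. Splitting each
level into its two halves gives the self-similarity `D(s, t) = |e00 t - e00 s| + r (D(2s, 2t) +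
D(2s - 1, 2t - 1))`, and likewise `Φ t = e00 t + r (Φ (2t) + Φ (2t - 1))` for
`Φ t = ∑ₘ rᵐ ∑ₖ e00 (2^m t - k)`. If `s, t` lie in the same half of `[0, 1]` only one term survives
and `1/2 + r C ≤ C` for `C = (5 + 4√2)/6`; if `1/2` separates them,
`D(s, t) = |e00 t - e00 s| + r (Φ (2s) + Φ (2t - 1))`, and the same self-similarity yields
`Φ t ≤ min ((4 + √2)/6 + r e00 t, (2 + √2)/3)`, which closes the estimate.

For `x*` every level `m + 1` is `+1` on its left half and `-1` on its right half, so its parts at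
`1/3` and `5/6` are `± r^(m+1) ∑ₖ e00 (2^m · 2/3 - k)`; by the same splitting the hat sums at `1/3`
and `2/3` feed each other, and both equal `1/3` at every level.
-/

open Finset

lemma e00_nonneg (t : ℝ) : 0 ≤ e00 t := le_max_right _ _

lemma e00_le_half (t : ℝ) : e00 t ≤ 1 / 2 :=
  max_le (min_le_iff.2 ((le_total t (1 / 2)).imp id fun h => by linarith)) (by norm_num)

lemma e00_le_self {t : ℝ} (h : 0 ≤ t) : e00 t ≤ t := max_le (min_le_left _ _) h

lemma e00_le_one_sub {t : ℝ} (h : t ≤ 1) : e00 t ≤ 1 - t :=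
  max_le (min_le_right _ _) (by linarith)

lemma e00_of_le_half {t : ℝ} (h0 : 0 ≤ t) (h : t ≤ 1 / 2) : e00 t = t := by
  rw [e00, min_eq_left (by linarith), max_eq_left h0]

lemma e00_one_sub (t : ℝ) : e00 (1 - t) = e00 t := by
  simp only [e00, sub_sub_cancel, min_comm]

lemma e00_eq_zero_of_nonpos {t : ℝ} (h : t ≤ 0) : e00 t = 0 :=
  max_eq_right ((min_le_left _ _).trans h)

lemma e00_eq_zero_of_one_le {t : ℝ} (h : 1 ≤ t) : e00 t = 0 := by
  rw [← e00_one_sub]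
  exact e00_eq_zero_of_nonpos (by linarith)

lemma e00_two_pow_mul_sub_eq_zero {m k : ℕ} (hk : k < 2 ^ m) {t : ℝ} (ht : t ≤ 0 ∨ 1 ≤ t) :
    e00 (2 ^ m * t - k) = 0 := by
  have hk' : (k : ℝ) + 1 ≤ 2 ^ m := by exact_mod_cast hk
  rcases ht with ht | ht
  · have : (0 : ℝ) ≤ k := k.cast_nonneg
    exact e00_eq_zero_of_nonpos (by nlinarith [pow_pos (two_pos (α := ℝ)) m])
  · exact e00_eq_zero_of_one_le (by nlinarith)

lemma e_natCast (m k : ℕ) (t : ℝ) : e m k t = (√2 / 2) ^ m * e00 (2 ^ m * t - k) := by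
  rw [e, Int.cast_natCast]
  congr 1
  rw [Real.sqrt_div_self, Real.sqrt_eq_rpow, ← Real.rpow_neg_one, ← Real.rpow_mul (by norm_num),
    ← Real.rpow_natCast, ← Real.rpow_mul (by norm_num)]
  ring_nf

lemma sum_range_two_pow_succ {M : Type*} [AddCommMonoid M] (f : ℕ → ℝ → ℝ → M) (m : ℕ)
    (s t : ℝ) :
    ∑ k ∈ range (2 ^ (m + 1)), f k (2 ^ (m + 1) * s - k) (2 ^ (m + 1) * t - k) =
      ∑ k ∈ range (2 ^ m), f k (2 ^ m * (2 * s) - k) (2 ^ m * (2 * t) - k) +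
      ∑ k ∈ range (2 ^ m), f (2 ^ m + k) (2 ^ m * (2 * s - 1) - k) (2 ^ m * (2 * t - 1) - k) := by
  rw [show 2 ^ (m + 1) = 2 ^ m + 2 ^ m by ring, sum_range_add]
  congr 1 <;> refine sum_congr rfl fun k _ => ?_ <;> congr 1 <;> push_cast <;> ring

lemma sum_range_succ_pow_mul {R : Type*} [CommSemiring R] (r : R) {a b : ℕ → R}
    (h : ∀ m, a (m + 1) = b m) (n : ℕ) :
    ∑ m ∈ range (n + 1), r ^ m * a m = a 0 + r * ∑ m ∈ range n, r ^ m * b m := by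
  rw [sum_range_succ', mul_sum, add_comm]
  simp only [h, pow_succ, pow_zero, one_mul, mul_comm, mul_left_comm]

/- On `[0, 1]`, `hatSum m t` is the distance from `2^m t` to `ℤ`, so `takagiSum` below is a partial
sum of the Takagi–Landsberg function with weight `1/√2`. -/
noncomputable def hatSum (m : ℕ) (t : ℝ) : ℝ := ∑ k ∈ range (2 ^ m), e00 (2 ^ m * t - k)

noncomputable def hatDist (m : ℕ) (s t : ℝ) : ℝ :=
  ∑ k ∈ range (2 ^ m), |e00 (2 ^ m * t - k) - e00 (2 ^ m * s - k)|

lemma hatDist_nonneg (m : ℕ) (s t : ℝ) : 0 ≤ hatDist m s t :=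
  sum_nonneg fun _ _ => abs_nonneg _

lemma hatSum_zero (t : ℝ) : hatSum 0 t = e00 t := by simp [hatSum]

lemma hatDist_zero (s t : ℝ) : hatDist 0 s t = |e00 t - e00 s| := by simp [hatDist]

lemma hatSum_succ (m : ℕ) (t : ℝ) : hatSum (m + 1) t = hatSum m (2 * t) + hatSum m (2 * t - 1) :=
  sum_range_two_pow_succ (fun _ _ y => e00 y) m t t

lemma hatDist_succ (m : ℕ) (s t : ℝ) :
    hatDist (m + 1) s t = hatDist m (2 * s) (2 * t) + hatDist m (2 * s - 1) (2 * t - 1) :=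
  sum_range_two_pow_succ (fun _ x y => |e00 y - e00 x|) m s t

lemma hatSum_eq_zero {t : ℝ} (ht : t ≤ 0 ∨ 1 ≤ t) (m : ℕ) : hatSum m t = 0 :=
  sum_eq_zero fun _ hk => e00_two_pow_mul_sub_eq_zero (mem_range.1 hk) ht

lemma hatDist_of_left {s : ℝ} (hs : s ≤ 0 ∨ 1 ≤ s) (m : ℕ) (t : ℝ) :
    hatDist m s t = hatSum m t :=
  sum_congr rfl fun _ hk => by
    rw [e00_two_pow_mul_sub_eq_zero (mem_range.1 hk) hs, sub_zero, abs_of_nonneg (e00_nonneg _)]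

lemma hatDist_of_right {t : ℝ} (ht : t ≤ 0 ∨ 1 ≤ t) (m : ℕ) (s : ℝ) :
    hatDist m s t = hatSum m s :=
  sum_congr rfl fun _ hk => by
    rw [e00_two_pow_mul_sub_eq_zero (mem_range.1 hk) ht, zero_sub, abs_neg,
      abs_of_nonneg (e00_nonneg _)]

noncomputable def takagiSum (n : ℕ) (t : ℝ) : ℝ := ∑ m ∈ range n, (√2 / 2) ^ m * hatSum m t

noncomputable def takagiDist (n : ℕ) (s t : ℝ) : ℝ :=
  ∑ m ∈ range n, (√2 / 2) ^ m * hatDist m s t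

lemma takagiSum_succ (n : ℕ) (t : ℝ) :
    takagiSum (n + 1) t = e00 t + √2 / 2 * (takagiSum n (2 * t) + takagiSum n (2 * t - 1)) := by
  rw [takagiSum, sum_range_succ_pow_mul _ (hatSum_succ · t), hatSum_zero, takagiSum, takagiSum,
    ← sum_add_distrib]
  simp only [mul_add]

lemma takagiDist_succ (n : ℕ) (s t : ℝ) :
    takagiDist (n + 1) s t = |e00 t - e00 s| +
      √2 / 2 * (takagiDist n (2 * s) (2 * t) + takagiDist n (2 * s - 1) (2 * t - 1)) := by
  rw [takagiDist, sum_range_succ_pow_mul _ (hatDist_succ · s t), hatDist_zero, takagiDist,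
    takagiDist, ← sum_add_distrib]
  simp only [mul_add]

lemma takagiSum_eq_zero {t : ℝ} (ht : t ≤ 0 ∨ 1 ≤ t) (n : ℕ) : takagiSum n t = 0 :=
  sum_eq_zero fun m _ => by rw [hatSum_eq_zero ht, mul_zero]

lemma takagiDist_of_left {s : ℝ} (hs : s ≤ 0 ∨ 1 ≤ s) (n : ℕ) (t : ℝ) :
    takagiDist n s t = takagiSum n t :=
  sum_congr rfl fun m _ => by rw [hatDist_of_left hs]

lemma takagiDist_of_right {t : ℝ} (ht : t ≤ 0 ∨ 1 ≤ t) (n : ℕ) (s : ℝ) :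
    takagiDist n s t = takagiSum n s :=
  sum_congr rfl fun m _ => by rw [hatDist_of_right ht]

lemma takagiDist_comm (n : ℕ) (s t : ℝ) : takagiDist n s t = takagiDist n t s := by
  simp only [takagiDist, hatDist, abs_sub_comm]

lemma sqrt_two_mem_Ioo : √2 ∈ Set.Ioo (4 / 3) (3 / 2) :=
  ⟨(Real.lt_sqrt (by norm_num)).2 (by norm_num), (Real.sqrt_lt' (by norm_num)).2 (by norm_num)⟩

/- The plateau `(2 + √2)/3` is the value of the Takagi–Landsberg function at `1/3`; the linear arm
has slope `1/√2` and meets the plateau at `u = 1/3`. -/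
noncomputable def takagiBound (u : ℝ) : ℝ := min ((4 + √2) / 6 + √2 / 2 * u) ((2 + √2) / 3)

lemma takagiBound_nonneg {u : ℝ} (hu : 0 ≤ u) : 0 ≤ takagiBound u :=
  le_min (by positivity) (by positivity)

lemma sqrt_two_div_two_mul_takagiBound_le (u : ℝ) :
    √2 / 2 * takagiBound u ≤ (1 + 2 * √2) / 6 + u / 2 ∧ √2 / 2 * takagiBound u ≤ (1 + √2) / 3 := by
  have hsq : √2 ^ 2 = 2 := Real.sq_sqrt zero_le_two
  have hr : 0 ≤ √2 / 2 := by positivity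
  have hlin : takagiBound u ≤ (4 + √2) / 6 + √2 / 2 * u := min_le_left _ _
  have hconst : takagiBound u ≤ (2 + √2) / 3 := min_le_right _ _
  constructor
  · linear_combination mul_le_mul_of_nonneg_left hlin hr + (1 / 12 + u / 4) * hsq
  · linear_combination mul_le_mul_of_nonneg_left hconst hr + hsq / 6

lemma takagiBound_step {u : ℝ} (hu : u ≤ 1 / 2) :
    u + √2 / 2 * takagiBound (e00 (2 * u)) ≤ takagiBound u := by
  obtain ⟨hlo, hhi⟩ := sqrt_two_mem_Ioo
  obtain ⟨hlin, hconst⟩ := sqrt_two_div_two_mul_takagiBound_le (e00 (2 * u))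
  rcases le_total u (1 / 3) with h | h
  · refine le_min ?_ (by linarith)
    nlinarith [mul_nonneg (by linarith : 0 ≤ 2 - √2) (by linarith : 0 ≤ 1 / 3 - u)]
  · have := e00_le_one_sub (by linarith : 2 * u ≤ 1)
    refine le_min ?_ (by linarith)
    nlinarith [mul_nonneg (by linarith : 0 ≤ √2) (by linarith : 0 ≤ u - 1 / 3)]

theorem takagiSum_le_takagiBound (n : ℕ) :
    ∀ {t : ℝ}, 0 ≤ t → t ≤ 1 → takagiSum n t ≤ takagiBound (e00 t) := by
  induction n with
  | zero =>
    intro t _ _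
    simpa [takagiSum] using takagiBound_nonneg (e00_nonneg t)
  | succ n ih =>
    intro t h0 h1
    rw [takagiSum_succ]
    rcases le_total t (1 / 2) with h | h
    · rw [takagiSum_eq_zero (Or.inl (by linarith : 2 * t - 1 ≤ 0)), add_zero, e00_of_le_half h0 h]
      calc t + √2 / 2 * takagiSum n (2 * t)
          ≤ t + √2 / 2 * takagiBound (e00 (2 * t)) := by
            gcongr; exact ih (by linarith) (by linarith)
        _ ≤ takagiBound t := takagiBound_step h
    · have he : e00 t = 1 - t := by
        rw [← e00_one_sub, e00_of_le_half (by linarith) (by linarith)]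
      have he2 : e00 (2 * t - 1) = e00 (2 * (1 - t)) := by
        rw [← e00_one_sub]; ring_nf
      rw [takagiSum_eq_zero (Or.inr (by linarith : 1 ≤ 2 * t)), zero_add, he]
      calc 1 - t + √2 / 2 * takagiSum n (2 * t - 1)
          ≤ 1 - t + √2 / 2 * takagiBound (e00 (2 * (1 - t))) := by
            gcongr; exact he2 ▸ ih (by linarith) (by linarith)
        _ ≤ takagiBound (1 - t) := takagiBound_step (by linarith)

lemma sqrt_two_div_two_mul_takagiSum_le (n : ℕ) {t : ℝ} (h0 : 0 ≤ t) (h1 : t ≤ 1) :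
    √2 / 2 * takagiSum n t ≤ (1 + 2 * √2) / 6 + e00 t / 2 :=
  (mul_le_mul_of_nonneg_left (takagiSum_le_takagiBound n h0 h1) (by positivity)).trans
    (sqrt_two_div_two_mul_takagiBound_le _).1

lemma abs_e00_sub_add_le {s t : ℝ} (hs0 : 0 ≤ s) (hs : s ≤ 1 / 2) (ht : 1 / 2 ≤ t) (ht1 : t ≤ 1) :
    |e00 t - e00 s| + (e00 (2 * s) + e00 (2 * t - 1)) / 2 ≤ 1 / 2 := by
  rw [e00_of_le_half hs0 hs, ← e00_one_sub t, e00_of_le_half (by linarith) (by linarith)]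
  have := e00_le_self (by linarith : 0 ≤ 2 * s)
  have := e00_le_one_sub (by linarith : 2 * s ≤ 1)
  have := e00_le_self (by linarith : 0 ≤ 2 * t - 1)
  have := e00_le_one_sub (by linarith : 2 * t - 1 ≤ 1)
  rw [← le_sub_iff_add_le, abs_le]
  constructor <;> linarith

lemma add_sqrt_two_div_two_mul_le {a b : ℝ} (ha : a ≤ 1 / 2) (hb : b ≤ (5 + 4 * √2) / 6) :
    a + √2 / 2 * b ≤ (5 + 4 * √2) / 6 := by
  have hsq : √2 ^ 2 = 2 := Real.sq_sqrt zero_le_two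
  obtain ⟨hlo, -⟩ := sqrt_two_mem_Ioo
  nlinarith [mul_le_mul_of_nonneg_left hb (by positivity : 0 ≤ √2 / 2)]

lemma takagiDist_le_of_le (n : ℕ) :
    ∀ {s t : ℝ}, 0 ≤ s → s ≤ t → t ≤ 1 → takagiDist n s t ≤ (5 + 4 * √2) / 6 := by
  induction n with
  | zero =>
    intro s t _ _ _
    simp only [takagiDist, range_zero, sum_empty]
    positivity
  | succ n ih =>
    intro s t hs hst ht
    have hhalf : |e00 t - e00 s| ≤ 1 / 2 :=
      abs_sub_le_of_nonneg_of_le (e00_nonneg t) (e00_le_half t) (e00_nonneg s) (e00_le_half s)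
    rw [takagiDist_succ]
    rcases le_total t (1 / 2) with h | h
    · rw [takagiDist_of_right (t := 2 * t - 1) (Or.inl (by linarith)),
        takagiSum_eq_zero (t := 2 * s - 1) (Or.inl (by linarith)), add_zero]
      exact add_sqrt_two_div_two_mul_le hhalf (ih (by linarith) (by linarith) (by linarith))
    rcases le_total (1 / 2) s with h' | h'
    · rw [takagiDist_of_left (s := 2 * s) (Or.inr (by linarith)),
        takagiSum_eq_zero (t := 2 * t) (Or.inr (by linarith)), zero_add]
      exact add_sqrt_two_div_two_mul_le hhalf (ih (by linarith) (by linarith) (by linarith))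
    rw [takagiDist_of_right (t := 2 * t) (Or.inr (by linarith)),
      takagiDist_of_left (s := 2 * s - 1) (Or.inl (by linarith)), mul_add]
    have := sqrt_two_div_two_mul_takagiSum_le n (by linarith : 0 ≤ 2 * s) (by linarith)
    have := sqrt_two_div_two_mul_takagiSum_le n (by linarith : 0 ≤ 2 * t - 1) (by linarith)
    have := abs_e00_sub_add_le hs h' h ht
    linarith

lemma takagiDist_le {s t : ℝ} (hs : s ∈ Set.Icc (0 : ℝ) 1) (ht : t ∈ Set.Icc (0 : ℝ) 1)
    (n : ℕ) : takagiDist n s t ≤ (5 + 4 * √2) / 6 := by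
  rcases le_total s t with h | h
  · exact takagiDist_le_of_le n hs.1 h ht.2
  · exact takagiDist_comm n s t ▸ takagiDist_le_of_le n ht.1 h hs.2

noncomputable def schauderLevel (θ : ℕ → ℕ → ℝ) (m : ℕ) (t : ℝ) : ℝ :=
  ∑ k ∈ range (2 ^ m), θ m k * e m k t

lemma schauderLevel_zero (θ : ℕ → ℕ → ℝ) (t : ℝ) : schauderLevel θ 0 t = θ 0 0 * e00 t := by
  simp [schauderLevel, e_natCast]

lemma schauderLevel_zero_right (θ : ℕ → ℕ → ℝ) (m : ℕ) : schauderLevel θ m 0 = 0 :=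
  sum_eq_zero fun _ hk => by
    rw [e_natCast, e00_two_pow_mul_sub_eq_zero (mem_range.1 hk) (Or.inl le_rfl), mul_zero,
      mul_zero]

lemma abs_schauderLevel_sub_le {θ : ℕ → ℕ → ℝ} {m : ℕ} (hθ : ∀ k, |θ m k| ≤ 1) (s t : ℝ) :
    |schauderLevel θ m t - schauderLevel θ m s| ≤ (√2 / 2) ^ m * hatDist m s t := by
  rw [schauderLevel, schauderLevel, ← sum_sub_distrib, hatDist, mul_sum]
  refine (abs_sum_le_sum_abs _ _).trans (sum_le_sum fun k _ => ?_)
  rw [e_natCast, e_natCast, ← mul_sub, ← mul_sub, abs_mul, abs_mul,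
    abs_of_nonneg (by positivity : (0 : ℝ) ≤ (√2 / 2) ^ m)]
  exact mul_le_of_le_one_left (by positivity) (hθ k)

theorem abs_tsum_schauderLevel_sub_le {θ : ℕ → ℕ → ℝ} (hθ : ∀ m k, |θ m k| ≤ 1) {s t : ℝ}
    (hs : s ∈ Set.Icc (0 : ℝ) 1) (ht : t ∈ Set.Icc (0 : ℝ) 1) :
    |∑' m, schauderLevel θ m t - ∑' m, schauderLevel θ m s| ≤ (5 + 4 * √2) / 6 := by
  have hdist_nonneg : ∀ s t : ℝ, ∀ m, 0 ≤ (√2 / 2) ^ m * hatDist m s t :=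
    fun s t m => mul_nonneg (by positivity) (hatDist_nonneg m s t)
  have hdist : ∀ {s t : ℝ}, s ∈ Set.Icc (0 : ℝ) 1 → t ∈ Set.Icc (0 : ℝ) 1 →
      Summable fun m => (√2 / 2) ^ m * hatDist m s t :=
    fun hs ht => summable_of_sum_range_le (hdist_nonneg _ _) (takagiDist_le hs ht)
  have hlevel : ∀ {u : ℝ}, u ∈ Set.Icc (0 : ℝ) 1 → Summable (schauderLevel θ · u) :=
    fun hu => (hdist (Set.left_mem_Icc.2 zero_le_one) hu).of_norm_bounded fun m => by
      simpa [schauderLevel_zero_right] using abs_schauderLevel_sub_le (hθ m) 0 _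
  rw [← (hlevel ht).tsum_sub (hlevel hs)]
  exact (tsum_of_norm_bounded (f := fun m => schauderLevel θ m t - schauderLevel θ m s)
    (hdist hs ht).hasSum fun m => abs_schauderLevel_sub_le (hθ m) s t).trans
    (Real.tsum_le_of_sum_range_le (hdist_nonneg s t) (takagiDist_le hs ht))

lemma schauderLevel_θstar_succ (n : ℕ) (t : ℝ) :
    schauderLevel θstar (n + 1) t =
      (√2 / 2) ^ (n + 1) * (hatSum n (2 * t) - hatSum n (2 * t - 1)) := by
  simp only [schauderLevel, e_natCast]
  rw [sum_range_two_pow_succ (fun k _ y => θstar (n + 1) k * ((√2 / 2) ^ (n + 1) * e00 y)) n t t]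
  simp only [θstar, Nat.add_sub_cancel, if_neg (Nat.succ_ne_zero n), ite_mul, one_mul, neg_one_mul]
  rw [sum_ite_of_true (fun k hk => mem_range.1 hk), sum_ite_of_false (fun k _ => by omega),
    sum_neg_distrib, ← mul_sum, ← mul_sum, hatSum, hatSum]
  ring

lemma hatSum_one_third_and_two_thirds (m : ℕ) :
    hatSum m (1 / 3) = 1 / 3 ∧ hatSum m (2 / 3) = 1 / 3 := by
  induction m with
  | zero =>
    rw [hatSum_zero, hatSum_zero, show (2 : ℝ) / 3 = 1 - 1 / 3 by norm_num, e00_one_sub,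
      e00_of_le_half (by norm_num) (by norm_num)]
    exact ⟨rfl, rfl⟩
  | succ m ih =>
    rw [hatSum_succ, hatSum_succ, hatSum_eq_zero (Or.inl (by norm_num : 2 * (1 / 3 : ℝ) - 1 ≤ 0)),
      hatSum_eq_zero (Or.inr (by norm_num : 1 ≤ 2 * (2 / 3 : ℝ)))]
    norm_num [ih.1, ih.2]

lemma schauderLevel_θstar_one_third (m : ℕ) : schauderLevel θstar m (1 / 3) = (√2 / 2) ^ m / 3 := by
  cases m with
  | zero =>
    rw [schauderLevel_zero, e00_of_le_half (by norm_num) (by norm_num)]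
    norm_num [θstar]
  | succ n =>
    rw [schauderLevel_θstar_succ, hatSum_eq_zero (t := 2 * (1 / 3) - 1) (Or.inl (by norm_num))]
    norm_num [(hatSum_one_third_and_two_thirds n).2]
    ring

lemma schauderLevel_θstar_five_sixths (m : ℕ) :
    schauderLevel θstar m (5 / 6) = (if m = 0 then 1 / 2 else 0) - (√2 / 2) ^ m / 3 := by
  cases m with
  | zero =>
    rw [schauderLevel_zero, show (5 : ℝ) / 6 = 1 - 1 / 6 by norm_num, e00_one_sub,
      e00_of_le_half (by norm_num) (by norm_num)]
    norm_num [θstar]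
  | succ n =>
    rw [schauderLevel_θstar_succ, hatSum_eq_zero (t := 2 * (5 / 6)) (Or.inr (by norm_num))]
    norm_num [(hatSum_one_third_and_two_thirds n).2]
    ring

lemma one_sub_sqrt_two_div_two_inv : (1 - √2 / 2)⁻¹ = 2 + √2 := by
  refine inv_eq_of_mul_eq_one_left ?_
  linear_combination (-1 / 2) * Real.sq_sqrt (zero_le_two : (0 : ℝ) ≤ 2)

lemma hasSum_pow_sqrt_two_div_two : HasSum (fun m : ℕ => (√2 / 2) ^ m) (2 + √2) := by
  rw [← one_sub_sqrt_two_div_two_inv]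
  exact hasSum_geometric_of_lt_one (by positivity) (by linarith [sqrt_two_mem_Ioo.2])

lemma xstar_one_third : xstar (1 / 3) = (2 + √2) / 3 :=
  ((hasSum_pow_sqrt_two_div_two.div_const 3).congr_fun schauderLevel_θstar_one_third).tsum_eq

lemma xstar_five_sixths : xstar (5 / 6) = 1 / 2 - (2 + √2) / 3 :=
  (((hasSum_ite_eq 0 (1 / 2 : ℝ)).sub (hasSum_pow_sqrt_two_div_two.div_const 3)).congr_fun
    schauderLevel_θstar_five_sixths).tsum_eq

theorem stmt_8 :
    (∀ x ∈ mathcalX, ∀ s ∈ Set.Icc (0 : ℝ) 1, ∀ t ∈ Set.Icc (0 : ℝ) 1,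
      |x t - x s| ≤ (5 + 4 * Real.sqrt 2) / 6) ∧
    xstar ∈ mathcalX ∧
    |xstar (5 / 6) - xstar (1 / 3)| = (5 + 4 * Real.sqrt 2) / 6 := by
  refine ⟨fun x ⟨θ, hθ, hx⟩ s hs t ht => ?_, ⟨θstar, fun m k => ?_, fun t => rfl⟩, ?_⟩
  · rw [hx t, hx s]
    exact abs_tsum_schauderLevel_sub_le (fun m k => by rcases hθ m k with h | h <;> simp [h]) hs ht
  · unfold θstar
    split_ifs <;> simp
  · rw [xstar_five_sixths, xstar_one_third, abs_of_nonpos (by linarith [Real.sqrt_nonneg 2])]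
    ring
end
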